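/- arXiv:2211.10832 — 3 statements merged into one kernel-verified Lean document; each statement's English description precedes it below -/
import Mathlib

section
/- Let f : [0,1]^d → ℝ be ρ-Lipschitz in 1-norm and let t ≥ 1 be an integer. Then there exists a constant M ≥ 1 (one may take M = 1/(1 − (1 − 1/(k·d²·2^{d−1}))^{1/d})) such that the constructed network f̂ satisfies ∫_{[0,1]^d} |f(x) − f̂(x)| dx ≤ 3ρd/t. -/
open Finset MeasureTheory

noncomputable section

/-- The ReLU function σ(z) = max(0, z). -/
def relu (z : ℝ) : ℝ := max 0 z

/-- `digit d t i r` is the `r`-th digit (most significant first) of the base-(t+1)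
representation of `i`, i.e. the vector π^i, so that `i = Σ_r (digit d t i r) * (t+1)^(d-1-r)`. -/
def digit (d t i : ℕ) (r : Fin d) : ℕ := i / (t + 1) ^ (d - 1 - (r : ℕ)) % (t + 1)

/-- The grid point π^i / t ∈ [0,1]^d. -/
def gridPt (d t i : ℕ) : Fin d → ℝ := fun r => (digit d t i r : ℝ) / t

/-- A g-unit with coefficient `a` located at grid point `i`:
`x ↦ a · σ(Σ_r −M·σ(−x_r + π^i_r/t) + 1/t)`. -/
def gUnit (d t : ℕ) (M a : ℝ) (i : ℕ) (x : Fin d → ℝ) : ℝ :=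
  a * relu ((∑ r : Fin d, -M * relu (-(x r) + gridPt d t i r)) + 1 / t)

/-- `net d t M f i` is the partial network `b + Σ_{j=1}^{i} ĝ_j` of the recursive
construction (with `b = f 0`). -/
def net (d t : ℕ) (M : ℝ) (f : (Fin d → ℝ) → ℝ) : ℕ → (Fin d → ℝ) → ℝ
  | 0 => fun _ => f (fun _ => 0)
  | i + 1 => fun x =>
      net d t M f i x +
        gUnit d t M ((t : ℝ) * (f (gridPt d t (i + 1)) - net d t M f i (gridPt d t (i + 1))))
          (i + 1) x

/-- The coefficient `a_i = t·(f(π^i/t) − (b + Σ_{j=1}^{i−1} ĝ_j(π^i/t)))` of the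
construction (meaningful for `i ≥ 1`). -/
def coef (d t : ℕ) (M : ℝ) (f : (Fin d → ℝ) → ℝ) (i : ℕ) : ℝ :=
  (t : ℝ) * (f (gridPt d t i) - net d t M f (i - 1) (gridPt d t i))

/-- The g-unit `ĝ_i` of the construction. -/
def gHat (d t : ℕ) (M : ℝ) (f : (Fin d → ℝ) → ℝ) (i : ℕ) : (Fin d → ℝ) → ℝ :=
  gUnit d t M (coef d t M f i) i

/-- The constructed network `f̂(x) = b + Σ_{i=1}^{k−1} ĝ_i(x)`, `k = (t+1)^d`. -/
def fHat (d t : ℕ) (M : ℝ) (f : (Fin d → ℝ) → ℝ) (x : Fin d → ℝ) : ℝ :=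
  f (fun _ => 0) + ∑ i ∈ Finset.Icc 1 ((t + 1) ^ d - 1), gHat d t M f i x

/-- `f` is ρ-Lipschitz in 1-norm on the set `s`. -/
def LipOneNorm (d : ℕ) (ρ : ℝ) (s : Set (Fin d → ℝ)) (f : (Fin d → ℝ) → ℝ) : Prop :=
  ∀ x ∈ s, ∀ x' ∈ s, |f x - f x'| ≤ ρ * ∑ r : Fin d, |x r - x' r|

/-- The cell `C*_i = {x : π^i_r/t ≤ x_r ≤ π^i_r/t + 1/t ∀r}`. -/
def cellStar (d t i : ℕ) : Set (Fin d → ℝ) :=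
  {x | ∀ r : Fin d, gridPt d t i r ≤ x r ∧ x r ≤ gridPt d t i r + 1 / t}

/-- The inner cell `C_i = {x : π^i_r/t ≤ x_r ≤ π^i_r/t + 1/t − 1/(Mt) ∀r}`. -/
def cellInner (d t : ℕ) (M : ℝ) (i : ℕ) : Set (Fin d → ℝ) :=
  {x | ∀ r : Fin d, gridPt d t i r ≤ x r ∧ x r ≤ gridPt d t i r + (1 / t - 1 / (M * t))}

/-- The boundary region `C'_i = C*_i \ C_i`. -/
def cellBoundary (d t : ℕ) (M : ℝ) (i : ℕ) : Set (Fin d → ℝ) :=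
  cellStar d t i \ cellInner d t M i

/-! ### Auxiliary lemmas: relu -/

lemma relu_nonneg (z : ℝ) : 0 ≤ relu z := le_max_left _ _

lemma relu_of_nonpos {z : ℝ} (h : z ≤ 0) : relu z = 0 := max_eq_left h

lemma relu_of_nonneg {z : ℝ} (h : 0 ≤ z) : relu z = z := max_eq_right h

lemma relu_le {z c : ℝ} (h0 : 0 ≤ c) (h : z ≤ c) : relu z ≤ c := max_le h0 h

lemma continuous_relu : Continuous relu := continuous_const.max continuous_id

/-! ### Base-(t+1) digit lemmas -/

lemma base_sum_mod (b : ℕ) : ∀ (n i : ℕ),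
    ∑ e ∈ Finset.range n, (i / b ^ e % b) * b ^ e = i % b ^ n := by
  intro n
  induction n with
  | zero => simp [Nat.mod_one]
  | succ n ih =>
    intro i
    rw [Finset.sum_range_succ, ih]
    have h1 : i % b ^ (n + 1) % b ^ n = i % b ^ n :=
      Nat.mod_mod_of_dvd _ (pow_dvd_pow b (Nat.le_succ n))
    have h2 : i % b ^ (n + 1) / b ^ n = i / b ^ n % b := by
      rw [pow_succ]
      exact Nat.mod_mul_right_div_self i (b ^ n) b
    have h3 := Nat.div_add_mod (i % b ^ (n + 1)) (b ^ n)
    rw [h1, h2] at h3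
    rw [mul_comm (i / b ^ n % b) (b ^ n)]
    omega

lemma digit_sum {d t i : ℕ} (hi : i < (t + 1) ^ d) :
    ∑ r : Fin d, digit d t i r * (t + 1) ^ (d - 1 - (r : ℕ)) = i := by
  have h0 : ∑ r : Fin d, digit d t i r * (t + 1) ^ (d - 1 - (r : ℕ))
      = ∑ j ∈ Finset.range d, (i / (t+1) ^ (d - 1 - j) % (t+1)) * (t+1) ^ (d - 1 - j) :=
    Fin.sum_univ_eq_sum_range (fun j => (i / (t+1) ^ (d - 1 - j) % (t+1)) * (t+1) ^ (d - 1 - j)) d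
  rw [h0, Finset.sum_range_reflect (fun e => (i / (t+1) ^ e % (t+1)) * (t+1) ^ e) d,
    base_sum_mod, Nat.mod_eq_of_lt hi]

lemma le_of_digit_le {d t i j : ℕ} (hi : i < (t + 1) ^ d) (hj : j < (t + 1) ^ d)
    (h : ∀ r, digit d t j r ≤ digit d t i r) : j ≤ i := by
  rw [← digit_sum hi, ← digit_sum hj]
  exact Finset.sum_le_sum fun r _ => Nat.mul_le_mul_right _ (h r)

lemma base_sum_lt (b : ℕ) (hb : 0 < b) : ∀ (n : ℕ) (g : ℕ → ℕ), (∀ e, e < n → g e < b) →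
    ∑ e ∈ Finset.range n, g e * b ^ e < b ^ n := by
  intro n
  induction n with
  | zero => simp
  | succ n ih =>
    intro g hg
    rw [Finset.sum_range_succ]
    have h1 : ∑ e ∈ Finset.range n, g e * b ^ e < b ^ n := ih g fun e he => hg e (by omega)
    have h2 : g n * b ^ n ≤ (b - 1) * b ^ n :=
      Nat.mul_le_mul_right _ (by have := hg n (by omega); omega)
    have h3 : (b - 1) * b ^ n + b ^ n = b ^ (n + 1) := by
      rw [pow_succ, Nat.sub_one_mul, Nat.sub_add_cancel (Nat.le_mul_of_pos_left _ hb), mul_comm]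
    omega

lemma base_sum_digit (b : ℕ) (hb : 0 < b) : ∀ (n : ℕ) (g : ℕ → ℕ) (_ : ∀ e, e < n → g e < b)
    (m : ℕ) (_ : m < n), (∑ e ∈ Finset.range n, g e * b ^ e) / b ^ m % b = g m := by
  intro n
  induction n with
  | zero => omega
  | succ n ih =>
    intro g hg m hm
    have hsplit : ∑ e ∈ Finset.range (n + 1), g e * b ^ e
        = (∑ e ∈ Finset.range n, g (e + 1) * b ^ e) * b + g 0 := by
      rw [Finset.sum_range_succ']
      congr 1
      · rw [Finset.sum_mul]
        exact Finset.sum_congr rfl fun e _ => by rw [pow_succ]; ring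
      · simp
    cases m with
    | zero =>
      rw [hsplit, pow_zero, Nat.div_one, mul_comm _ b, Nat.mul_add_mod, Nat.mod_eq_of_lt (hg 0 (by omega))]
    | succ m =>
      rw [hsplit, pow_succ', ← Nat.div_div_eq_div_mul, mul_comm _ b, Nat.mul_add_div hb,
        Nat.div_eq_of_lt (hg 0 (by omega)), add_zero]
      exact ih (fun e => g (e + 1)) (fun e he => hg (e + 1) (by omega)) m (by omega)

lemma coords_spec {d t : ℕ} (hd : 0 < d) (c : Fin d → ℕ) (hc : ∀ r, c r ≤ t) :
    (∑ r : Fin d, c r * (t + 1) ^ (d - 1 - (r : ℕ))) < (t + 1) ^ d ∧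
    ∀ r, digit d t (∑ r : Fin d, c r * (t + 1) ^ (d - 1 - (r : ℕ))) r = c r := by
  set g : ℕ → ℕ := fun e => c ⟨d - 1 - e, by omega⟩ with hg
  have hge : ∀ e, e < d → g e < t + 1 := fun e _ => Nat.lt_succ_of_le (hc _)
  have hrw : ∑ r : Fin d, c r * (t + 1) ^ (d - 1 - (r : ℕ))
      = ∑ e ∈ Finset.range d, g e * (t + 1) ^ e := by
    rw [← Finset.sum_range_reflect (fun e => g e * (t + 1) ^ e) d]
    rw [← Fin.sum_univ_eq_sum_range (fun j => g (d - 1 - j) * (t + 1) ^ (d - 1 - j)) d]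
    refine Finset.sum_congr rfl fun r _ => ?_
    have hval : g (d - 1 - (r : ℕ)) = c r := by
      have : d - 1 - (d - 1 - (r : ℕ)) = (r : ℕ) := by omega
      simp only [hg, this]
    rw [hval]
  constructor
  · rw [hrw]; exact base_sum_lt (t + 1) (Nat.succ_pos t) d g hge
  · intro r
    rw [hrw]
    show (∑ e ∈ Finset.range d, g e * (t + 1) ^ e) / (t + 1) ^ (d - 1 - (r : ℕ)) % (t + 1) = c r
    rw [base_sum_digit (t + 1) (Nat.succ_pos t) d g hge (d - 1 - (r : ℕ)) (by omega)]
    have : d - 1 - (d - 1 - (r : ℕ)) = (r : ℕ) := by omega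
    simp only [hg, this]
/-! ### Network evaluation lemmas -/

lemma digit_lt_succ (d t i : ℕ) (r : Fin d) : digit d t i r < t + 1 :=
  Nat.mod_lt _ (Nat.succ_pos t)

lemma gridPt_nonneg (d t i : ℕ) (r : Fin d) : 0 ≤ gridPt d t i r := by
  unfold gridPt; positivity

lemma gridPt_le_one {d t : ℕ} (ht : 1 ≤ t) (i : ℕ) (r : Fin d) : gridPt d t i r ≤ 1 := by
  unfold gridPt
  rw [div_le_one (by exact_mod_cast ht : (0:ℝ) < t)]
  exact_mod_cast Nat.lt_succ_iff.1 (digit_lt_succ d t i r)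

lemma gridPt_mono {d t i j : ℕ} (h : ∀ r, digit d t j r ≤ digit d t i r) (r : Fin d) :
    gridPt d t j r ≤ gridPt d t i r := by
  unfold gridPt
  gcongr
  exact_mod_cast h r

lemma gUnit_eq_of_dom {d t : ℕ} {M a : ℝ} {i : ℕ} {x : Fin d → ℝ}
    (h : ∀ r, gridPt d t i r ≤ x r) : gUnit d t M a i x = a * (1 / t) := by
  unfold gUnit
  have hz : ∀ r : Fin d, -M * relu (-(x r) + gridPt d t i r) = 0 := fun r => by
    rw [relu_of_nonpos (by linarith [h r])]; ring
  rw [Finset.sum_eq_zero fun r _ => hz r, zero_add, relu_of_nonneg (by positivity)]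

lemma gUnit_eq_zero {d t : ℕ} {M a : ℝ} {i : ℕ} {x : Fin d → ℝ} (ht : 1 ≤ t) (hM : 1 ≤ M)
    (r0 : Fin d) (hr0 : x r0 ≤ gridPt d t i r0 - 1 / (M * t)) : gUnit d t M a i x = 0 := by
  have htR : (0:ℝ) < t := by exact_mod_cast ht
  have hM0 : (0:ℝ) < M := by linarith
  unfold gUnit
  have hterm : ∀ r : Fin d, -M * relu (-(x r) + gridPt d t i r) ≤ 0 := fun r =>
    mul_nonpos_of_nonpos_of_nonneg (by linarith) (relu_nonneg _)
  have hr0' : -M * relu (-(x r0) + gridPt d t i r0) ≤ -(1 / t) := by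
    have h1 : 1 / (M * t) ≤ -(x r0) + gridPt d t i r0 := by linarith
    have h2 : relu (-(x r0) + gridPt d t i r0) = -(x r0) + gridPt d t i r0 :=
      relu_of_nonneg (le_trans (by positivity) h1)
    rw [h2]
    have h3 : M * (1 / (M * t)) ≤ M * (-(x r0) + gridPt d t i r0) :=
      mul_le_mul_of_nonneg_left h1 (le_of_lt hM0)
    have h4 : M * (1 / (M * t)) = 1 / t := by field_simp
    linarith
  have hsum : (∑ r : Fin d, -M * relu (-(x r) + gridPt d t i r)) + 1 / t ≤ 0 := by
    have : (∑ r : Fin d, -M * relu (-(x r) + gridPt d t i r))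
        ≤ ∑ r : Fin d, (if r = r0 then -(1/(t:ℝ)) else 0) := by
      refine Finset.sum_le_sum fun r _ => ?_
      by_cases h : r = r0
      · subst h; rw [if_pos rfl]; exact hr0'
      · rw [if_neg h]; exact hterm r
    rw [Finset.sum_ite_eq' Finset.univ r0 (fun _ => -(1/(t:ℝ))), if_pos (Finset.mem_univ r0)]
      at this
    linarith
  rw [relu_of_nonpos hsum, mul_zero]

lemma gUnit_abs_le {d t : ℕ} {M a : ℝ} {i : ℕ} {x : Fin d → ℝ} (ht : 1 ≤ t) (hM : 0 ≤ M) :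
    |gUnit d t M a i x| ≤ |a| * (1 / t) := by
  have htR : (0:ℝ) < t := by exact_mod_cast ht
  unfold gUnit
  rw [abs_mul]
  refine mul_le_mul_of_nonneg_left ?_ (abs_nonneg a)
  have hterm : ∀ r : Fin d, -M * relu (-(x r) + gridPt d t i r) ≤ 0 := fun r =>
    mul_nonpos_of_nonpos_of_nonneg (by linarith) (relu_nonneg _)
  have hsum : (∑ r : Fin d, -M * relu (-(x r) + gridPt d t i r)) + 1 / t ≤ 1 / t := by
    have : (∑ r : Fin d, -M * relu (-(x r) + gridPt d t i r)) ≤ 0 :=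
      Finset.sum_nonpos fun r _ => hterm r
    linarith
  rw [abs_of_nonneg (relu_nonneg _)]
  exact relu_le (by positivity) hsum

lemma netEq (d t : ℕ) (M : ℝ) (f : (Fin d → ℝ) → ℝ) :
    ∀ (m : ℕ) (x : Fin d → ℝ),
      net d t M f m x = f (fun _ => 0) + ∑ j ∈ Finset.Icc 1 m, gHat d t M f j x := by
  intro m
  induction m with
  | zero => intro x; simp [net]
  | succ m ih =>
    intro x
    rw [Finset.sum_Icc_succ_top (by omega : 1 ≤ m + 1), ← add_assoc, ← ih x]
    show net d t M f m x + gUnit d t M _ (m + 1) x = net d t M f m x + gHat d t M f (m + 1) x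
    rfl

lemma fHat_eq_net (d t : ℕ) (M : ℝ) (f : (Fin d → ℝ) → ℝ) (x : Fin d → ℝ) :
    fHat d t M f x = net d t M f ((t + 1) ^ d - 1) x :=
  (netEq d t M f _ x).symm

lemma gUnit_grid {d t : ℕ} {M a : ℝ} (ht : 1 ≤ t) (hM : 1 ≤ M) (j i : ℕ) :
    gUnit d t M a j (gridPt d t i)
      = if (∀ r, digit d t j r ≤ digit d t i r) then a * (1 / t) else 0 := by
  have htR : (0:ℝ) < t := by exact_mod_cast ht
  have hM0 : (0:ℝ) < M := by linarith
  split_ifs with h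
  · exact gUnit_eq_of_dom (gridPt_mono h)
  · push_neg at h
    obtain ⟨r0, hr0⟩ := h
    refine gUnit_eq_zero ht hM r0 ?_
    have hd : (digit d t i r0 : ℝ) + 1 ≤ (digit d t j r0 : ℝ) := by exact_mod_cast hr0
    have hMt : 1 / (M * (t:ℝ)) ≤ 1 / t :=
      one_div_le_one_div_of_le htR (le_mul_of_one_le_left htR.le hM)
    have h5 : gridPt d t i r0 ≤ gridPt d t j r0 - 1 / t := by
      have h6 : (digit d t i r0 : ℝ) / t ≤ ((digit d t j r0 : ℝ) - 1) / t := by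
        gcongr
        linarith
      calc gridPt d t i r0 = (digit d t i r0 : ℝ) / t := rfl
        _ ≤ ((digit d t j r0 : ℝ) - 1) / t := h6
        _ = gridPt d t j r0 - 1 / t := by unfold gridPt; ring
    linarith
lemma gHat_grid {d t : ℕ} {M : ℝ} {f : (Fin d → ℝ) → ℝ} (ht : 1 ≤ t) (hM : 1 ≤ M) (j i : ℕ) :
    gHat d t M f j (gridPt d t i)
      = if (∀ r, digit d t j r ≤ digit d t i r) then coef d t M f j * (1 / t) else 0 :=
  gUnit_grid ht hM j i

lemma net_grid {d t : ℕ} {M : ℝ} {f : (Fin d → ℝ) → ℝ} (ht : 1 ≤ t) (hM : 1 ≤ M) (m i : ℕ) :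
    net d t M f m (gridPt d t i) = f (fun _ => 0) +
      ∑ j ∈ Finset.Icc 1 m,
        (if (∀ r, digit d t j r ≤ digit d t i r) then coef d t M f j * (1 / t) else 0) := by
  rw [netEq]
  congr 1
  exact Finset.sum_congr rfl fun j _ => gHat_grid ht hM j i

lemma gridPt_zero (d t : ℕ) : gridPt d t 0 = fun _ => 0 := by
  funext r
  simp [gridPt, digit]

lemma net_grid_self {d t : ℕ} {M : ℝ} {f : (Fin d → ℝ) → ℝ} (ht : 1 ≤ t) (i : ℕ) :
    net d t M f i (gridPt d t i) = f (gridPt d t i) := by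
  have htR : (0:ℝ) < t := by exact_mod_cast ht
  cases i with
  | zero => rw [gridPt_zero]; rfl
  | succ m =>
    show net d t M f m _ + gUnit d t M _ (m + 1) (gridPt d t (m + 1)) = _
    rw [gUnit_eq_of_dom (fun r => le_refl _)]
    field_simp
    ring

/-- On the inner cell `C_i`, the network is exactly `f(π^i/t)`. -/
lemma fHat_inner {d t : ℕ} {M : ℝ} {f : (Fin d → ℝ) → ℝ} (ht : 1 ≤ t) (hM : 1 ≤ M)
    {i : ℕ} (hi : i < (t + 1) ^ d) {x : Fin d → ℝ} (hx : x ∈ cellInner d t M i) :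
    fHat d t M f x = f (gridPt d t i) := by
  have htR : (0:ℝ) < t := by exact_mod_cast ht
  have hM0 : (0:ℝ) < M := by linarith
  have hMt : 1 / (M * (t:ℝ)) ≤ 1 / t :=
    one_div_le_one_div_of_le htR (le_mul_of_one_le_left htR.le hM)
  -- each unit evaluates like at the grid point
  have hunit : ∀ j : ℕ, gHat d t M f j x
      = if (∀ r, digit d t j r ≤ digit d t i r) then coef d t M f j * (1 / t) else 0 := by
    intro j
    split_ifs with h
    · exact gUnit_eq_of_dom fun r => le_trans (gridPt_mono h r) (hx r).1
    · push_neg at h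
      obtain ⟨r0, hr0⟩ := h
      refine gUnit_eq_zero ht hM r0 ?_
      have hd : (digit d t i r0 : ℝ) + 1 ≤ (digit d t j r0 : ℝ) := by exact_mod_cast hr0
      have h5 : gridPt d t i r0 ≤ gridPt d t j r0 - 1 / t := by
        have h6 : (digit d t i r0 : ℝ) / t ≤ ((digit d t j r0 : ℝ) - 1) / t := by
          gcongr
          linarith
        calc gridPt d t i r0 = (digit d t i r0 : ℝ) / t := rfl
          _ ≤ ((digit d t j r0 : ℝ) - 1) / t := h6
          _ = gridPt d t j r0 - 1 / t := by unfold gridPt; ring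
      have := (hx r0).2
      linarith
  have hk1 : 1 ≤ (t + 1) ^ d := Nat.one_le_pow _ _ (Nat.succ_pos t)
  have hile : i ≤ (t + 1) ^ d - 1 := by omega
  have hsub : Finset.Icc 1 i ⊆ Finset.Icc 1 ((t + 1) ^ d - 1) := by
    intro j hj
    rw [Finset.mem_Icc] at *
    omega
  have hvanish : ∀ j ∈ Finset.Icc 1 ((t + 1) ^ d - 1), j ∉ Finset.Icc 1 i →
      (if (∀ r, digit d t j r ≤ digit d t i r) then coef d t M f j * (1 / (t:ℝ)) else 0) = 0 := by
    intro j hj hj'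
    rw [Finset.mem_Icc] at hj hj'
    rw [if_neg]
    intro h
    have hjk : j < (t + 1) ^ d := by omega
    have := le_of_digit_le hi hjk h
    omega
  calc fHat d t M f x
      = f (fun _ => 0) + ∑ j ∈ Finset.Icc 1 ((t + 1) ^ d - 1),
          (if (∀ r, digit d t j r ≤ digit d t i r) then coef d t M f j * (1 / t) else 0) := by
        unfold fHat
        congr 1
        exact Finset.sum_congr rfl fun j _ => hunit j
    _ = f (fun _ => 0) + ∑ j ∈ Finset.Icc 1 i,
          (if (∀ r, digit d t j r ≤ digit d t i r) then coef d t M f j * (1 / t) else 0) := by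
        rw [Finset.sum_subset hsub hvanish]
    _ = net d t M f i (gridPt d t i) := (net_grid ht hM i i).symm
    _ = f (gridPt d t i) := net_grid_self ht i

/-- At grid points, partial networks do not depend on `M ≥ 1`. -/
lemma net_M_indep {d t : ℕ} {M M' : ℝ} {f : (Fin d → ℝ) → ℝ} (ht : 1 ≤ t)
    (hM : 1 ≤ M) (hM' : 1 ≤ M') :
    ∀ (m i : ℕ), net d t M f m (gridPt d t i) = net d t M' f m (gridPt d t i) := by
  intro m
  induction m with
  | zero => intro i; rfl
  | succ m ih =>
    intro i
    show net d t M f m _ + gUnit d t M _ (m + 1) (gridPt d t i)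
        = net d t M' f m _ + gUnit d t M' _ (m + 1) (gridPt d t i)
    rw [gUnit_grid ht hM, gUnit_grid ht hM', ih i, ih (m + 1)]

lemma coef_M_indep {d t : ℕ} {M M' : ℝ} {f : (Fin d → ℝ) → ℝ} (ht : 1 ≤ t)
    (hM : 1 ≤ M) (hM' : 1 ≤ M') (j : ℕ) : coef d t M f j = coef d t M' f j := by
  unfold coef
  rw [net_M_indep ht hM hM']

/-- Global bound on the network away from its constant term. -/
lemma fHat_global {d t : ℕ} {M : ℝ} {f : (Fin d → ℝ) → ℝ} (ht : 1 ≤ t) (hM : 0 ≤ M)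
    (x : Fin d → ℝ) :
    |fHat d t M f x - f (fun _ => 0)|
      ≤ ∑ j ∈ Finset.Icc 1 ((t + 1) ^ d - 1), |coef d t M f j| := by
  have htR : (0:ℝ) < t := by exact_mod_cast ht
  have ht1 : 1 / (t:ℝ) ≤ 1 := by
    rw [div_le_one htR]; exact_mod_cast ht
  unfold fHat
  rw [add_sub_cancel_left]
  calc |∑ j ∈ Finset.Icc 1 ((t + 1) ^ d - 1), gHat d t M f j x|
      ≤ ∑ j ∈ Finset.Icc 1 ((t + 1) ^ d - 1), |gHat d t M f j x| :=
        Finset.abs_sum_le_sum_abs _ _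
    _ ≤ ∑ j ∈ Finset.Icc 1 ((t + 1) ^ d - 1), |coef d t M f j| := by
        refine Finset.sum_le_sum fun j _ => ?_
        calc |gHat d t M f j x| ≤ |coef d t M f j| * (1 / t) := gUnit_abs_le ht hM
          _ ≤ |coef d t M f j| * 1 := mul_le_mul_of_nonneg_left ht1 (abs_nonneg _)
          _ = |coef d t M f j| := mul_one _
/-- Every point of the unit cube lies in some cell `C*_i`. -/
lemma exists_cell {d t : ℕ} (hd : 0 < d) (ht : 1 ≤ t) {x : Fin d → ℝ}
    (hx : x ∈ Set.Icc (0 : Fin d → ℝ) 1) :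
    ∃ i, i < (t + 1) ^ d ∧ x ∈ cellStar d t i := by
  have htR : (0:ℝ) < t := by exact_mod_cast ht
  obtain ⟨hx0, hx1⟩ := hx
  set c : Fin d → ℕ := fun r => ⌊(t:ℝ) * x r⌋₊ with hc
  have hcle : ∀ r, c r ≤ t := by
    intro r
    have h1 : (t:ℝ) * x r ≤ (t:ℝ) := by
      have h1r : x r ≤ 1 := hx1 r
      nlinarith
    calc c r ≤ ⌊(t:ℝ)⌋₊ := Nat.floor_le_floor h1
      _ = t := Nat.floor_natCast t
  obtain ⟨hlt, hdig⟩ := coords_spec hd c hcle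
  refine ⟨_, hlt, fun r => ?_⟩
  rw [show gridPt d t (∑ r : Fin d, c r * (t + 1) ^ (d - 1 - (r : ℕ))) r
      = (c r : ℝ) / t by unfold gridPt; rw [hdig r]]
  constructor
  · rw [div_le_iff₀ htR]
    have h0r : (0:ℝ) ≤ x r := hx0 r
    calc (c r : ℝ) ≤ (t:ℝ) * x r := Nat.floor_le (by nlinarith)
      _ = x r * t := mul_comm _ _
  · have h2 : (t:ℝ) * x r < (c r : ℝ) + 1 := Nat.lt_floor_add_one _
    have h3 : x r ≤ ((c r : ℝ) + 1) / t := by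
      rw [le_div_iff₀ htR]; linarith
    calc x r ≤ ((c r : ℝ) + 1) / t := h3
      _ = (c r : ℝ) / t + 1 / t := by ring

/-- The cells as products of intervals. -/
lemma cellStar_eq_Icc (d t i : ℕ) :
    cellStar d t i = Set.Icc (gridPt d t i) (fun r => gridPt d t i r + 1 / t) := by
  ext x
  simp only [cellStar, Set.mem_setOf_eq, Set.mem_Icc, Pi.le_def]
  exact ⟨fun h => ⟨fun r => (h r).1, fun r => (h r).2⟩, fun h r => ⟨h.1 r, h.2 r⟩⟩

lemma cellInner_eq_Icc (d t : ℕ) (M : ℝ) (i : ℕ) :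
    cellInner d t M i
      = Set.Icc (gridPt d t i) (fun r => gridPt d t i r + (1 / t - 1 / (M * t))) := by
  ext x
  simp only [cellInner, Set.mem_setOf_eq, Set.mem_Icc, Pi.le_def]
  exact ⟨fun h => ⟨fun r => (h r).1, fun r => (h r).2⟩, fun h r => ⟨h.1 r, h.2 r⟩⟩

lemma pow_sub_pow_le_lin (n : ℕ) : ∀ {a c : ℝ}, 0 ≤ c → c ≤ a → a ≤ 1 →
    a ^ n - c ^ n ≤ n * (a - c) := by
  induction n with
  | zero => intro a c _ _ _; simp
  | succ n ih =>
    intro a c hc hca ha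
    have h0a : 0 ≤ a := le_trans hc hca
    have hcn : (0:ℝ) ≤ c ^ n := pow_nonneg hc n
    have hcn1 : c ^ n ≤ 1 := pow_le_one₀ hc (le_trans hca ha)
    have hih := ih hc hca ha
    have hann : (0:ℝ) ≤ a ^ n - c ^ n := by
      have := pow_le_pow_left₀ hc hca n
      linarith
    have key : a ^ (n+1) - c ^ (n+1) = a * (a ^ n - c ^ n) + (a - c) * c ^ n := by ring
    rw [key]
    push_cast
    nlinarith
lemma continuous_gUnit (d t : ℕ) (M a : ℝ) (i : ℕ) : Continuous (gUnit d t M a i) := by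
  unfold gUnit
  refine continuous_const.mul (continuous_relu.comp (Continuous.add ?_ continuous_const))
  exact continuous_finset_sum _ fun r _ =>
    continuous_const.mul (continuous_relu.comp ((continuous_apply r).neg.add continuous_const))

lemma continuous_fHat (d t : ℕ) (M : ℝ) (f : (Fin d → ℝ) → ℝ) :
    Continuous (fHat d t M f) := by
  unfold fHat
  exact continuous_const.add (continuous_finset_sum _ fun j _ => continuous_gUnit d t M _ j)

lemma lip_continuousOn {d : ℕ} {ρ : ℝ} {f : (Fin d → ℝ) → ℝ} (hρ : 0 ≤ ρ)
    (hf : LipOneNorm d ρ (Set.Icc 0 1) f) : ContinuousOn f (Set.Icc 0 1) := by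
  refine LipschitzOnWith.continuousOn (K := Real.toNNReal (ρ * d)) ?_
  rw [lipschitzOnWith_iff_dist_le_mul]
  intro x hx y hy
  have h1 : dist (f x) (f y) ≤ ρ * ∑ r : Fin d, |x r - y r| := by
    rw [Real.dist_eq]; exact hf x hx y hy
  have h2 : ∑ r : Fin d, |x r - y r| ≤ (d : ℝ) * dist x y := by
    calc ∑ r : Fin d, |x r - y r| ≤ ∑ _r : Fin d, dist x y :=
          Finset.sum_le_sum fun r _ => by
            rw [← Real.dist_eq]; exact dist_le_pi_dist x y r
      _ = (d : ℝ) * dist x y := by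
          rw [Finset.sum_const, Finset.card_univ, Fintype.card_fin, nsmul_eq_mul]
  calc dist (f x) (f y) ≤ ρ * ((d:ℝ) * dist x y) := by
        refine le_trans h1 (mul_le_mul_of_nonneg_left h2 hρ)
    _ = (ρ * d) * dist x y := by ring
    _ ≤ (Real.toNNReal (ρ * d) : ℝ) * dist x y := by
        refine mul_le_mul_of_nonneg_right ?_ dist_nonneg
        rw [Real.coe_toNNReal']
        exact le_max_left _ _

lemma volume_cellStar {d t : ℕ} (ht : 1 ≤ t) (i : ℕ) :
    volume (cellStar d t i) = ENNReal.ofReal ((1 / t : ℝ) ^ d) := by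
  have htR : (0:ℝ) < t := by exact_mod_cast ht
  rw [cellStar_eq_Icc, Real.volume_Icc_pi]
  simp only [add_sub_cancel_left]
  rw [Finset.prod_const, Finset.card_univ, Fintype.card_fin,
    ENNReal.ofReal_pow (by positivity)]

lemma volume_cellInner {d t : ℕ} {M : ℝ} (ht : 1 ≤ t) (hM : 1 ≤ M) (i : ℕ) :
    volume (cellInner d t M i) = ENNReal.ofReal ((1 / t - 1 / (M * t) : ℝ) ^ d) := by
  have htR : (0:ℝ) < t := by exact_mod_cast ht
  have hMt : 1 / (M * (t:ℝ)) ≤ 1 / t :=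
    one_div_le_one_div_of_le htR (le_mul_of_one_le_left htR.le (by linarith))
  rw [cellInner_eq_Icc, Real.volume_Icc_pi]
  simp only [add_sub_cancel_left]
  rw [Finset.prod_const, Finset.card_univ, Fintype.card_fin,
    ENNReal.ofReal_pow (by linarith)]

lemma volume_cellBoundary_le {d t : ℕ} {M : ℝ} (ht : 1 ≤ t) (hM : 1 ≤ M) (i : ℕ) :
    volume (cellBoundary d t M i) ≤ ENNReal.ofReal ((d : ℝ) * (1 / (M * t))) := by
  have htR : (0:ℝ) < t := by exact_mod_cast ht
  have hM0 : (0:ℝ) < M := by linarith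
  have hMt : 1 / (M * (t:ℝ)) ≤ 1 / t :=
    one_div_le_one_div_of_le htR (le_mul_of_one_le_left htR.le hM)
  have hMt0 : (0:ℝ) ≤ 1 / (M * t) := by positivity
  have hsub : cellInner d t M i ⊆ cellStar d t i := by
    intro x hx r
    exact ⟨(hx r).1, le_trans ((hx r).2) (by linarith)⟩
  have hmeas : NullMeasurableSet (cellInner d t M i) volume := by
    rw [cellInner_eq_Icc]
    exact measurableSet_Icc.nullMeasurableSet
  have hfin : volume (cellInner d t M i) ≠ ⊤ := by
    rw [volume_cellInner ht hM i]
    exact ENNReal.ofReal_ne_top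
  unfold cellBoundary
  rw [measure_diff hsub hmeas hfin, volume_cellStar ht i, volume_cellInner ht hM i,
    ← ENNReal.ofReal_sub _ (pow_nonneg (by linarith) d)]
  refine ENNReal.ofReal_le_ofReal ?_
  have ht1 : 1 / (t:ℝ) ≤ 1 := by rw [div_le_one htR]; exact_mod_cast ht
  have := pow_sub_pow_le_lin d (a := 1 / (t:ℝ)) (c := 1 / t - 1 / (M * t))
    (by linarith) (by linarith) ht1
  calc (1 / (t:ℝ)) ^ d - (1 / t - 1 / (M * t)) ^ d
      ≤ (d:ℝ) * (1 / t - (1 / t - 1 / (M * t))) := this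
    _ = (d:ℝ) * (1 / (M * t)) := by ring
/-- If f : [0,1]^d → ℝ is ρ-Lipschitz in 1-norm and t ≥ 1 is an integer,
then there exists a constant M ≥ 1 such that the constructed network f̂ satisfies
∫_{[0,1]^d} |f(x) − f̂(x)| dx ≤ 3ρd/t. -/
theorem stmt_0 (d t : ℕ) (hd : 1 ≤ d) (ht : 1 ≤ t) (ρ : ℝ) (hρ : 0 ≤ ρ)
    (f : (Fin d → ℝ) → ℝ) (hf : LipOneNorm d ρ (Set.Icc 0 1) f) :
    ∃ M : ℝ, 1 ≤ M ∧
      ∫ x in Set.Icc (0 : Fin d → ℝ) 1, |f x - fHat d t M f x| ≤ 3 * ρ * d / t := by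
  have htR : (1:ℝ) ≤ t := by exact_mod_cast ht
  have htR0 : (0:ℝ) < t := by linarith
  have hdR : (1:ℝ) ≤ d := by exact_mod_cast hd
  have hdR0 : (0:ℝ) < d := by linarith
  have hk0 : 0 < (t + 1) ^ d := Nat.one_le_pow _ _ (Nat.succ_pos t)
  have h0mem : (fun _ => (0:ℝ)) ∈ Set.Icc (0 : Fin d → ℝ) 1 :=
    Set.mem_Icc.mpr ⟨fun r => le_refl 0, fun r => zero_le_one⟩
  have hgmem : ∀ i, gridPt d t i ∈ Set.Icc (0 : Fin d → ℝ) 1 := fun i =>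
    Set.mem_Icc.mpr ⟨fun r => gridPt_nonneg d t i r, fun r => gridPt_le_one ht i r⟩
  rcases eq_or_lt_of_le hρ with hρ0 | hρpos
  · -- degenerate case ρ = 0 : f is constant on the cube and f̂ = f there
    refine ⟨1, le_refl 1, ?_⟩
    have hconst : ∀ y ∈ Set.Icc (0 : Fin d → ℝ) 1, f y = f (fun _ => 0) := by
      intro y hy
      have h1 := hf y hy _ h0mem
      rw [← hρ0, zero_mul] at h1
      have h2 := abs_nonneg (f y - f (fun _ => 0))
      have : |f y - f (fun _ => 0)| = 0 := le_antisymm h1 h2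
      rw [abs_eq_zero] at this
      linarith
    have hnet : ∀ (m : ℕ) (x : Fin d → ℝ), net d t 1 f m x = f (fun _ => 0) := by
      intro m
      induction m with
      | zero => intro x; rfl
      | succ m ih =>
        intro x
        show net d t 1 f m x + gUnit d t 1
          ((t : ℝ) * (f (gridPt d t (m + 1)) - net d t 1 f m (gridPt d t (m + 1)))) (m + 1) x = _
        rw [ih x, ih (gridPt d t (m + 1)), hconst (gridPt d t (m + 1)) (hgmem (m + 1))]
        simp [gUnit]
    have hzero : ∀ x ∈ Set.Icc (0 : Fin d → ℝ) 1,
        |f x - fHat d t 1 f x| = (fun _ => (0:ℝ)) x := by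
      intro x hx
      rw [fHat_eq_net, hnet, hconst x hx, sub_self, abs_zero]
    rw [setIntegral_congr_fun measurableSet_Icc hzero, integral_zero, ← hρ0]
    norm_num
  · -- main case ρ > 0
    set A := ∑ j ∈ Finset.Icc 1 ((t + 1) ^ d - 1), |coef d t 1 f j| with hA
    have hA0 : 0 ≤ A := Finset.sum_nonneg fun j _ => abs_nonneg _
    set C0 : ℝ := ρ * d + A with hC0
    have hC00 : 0 ≤ C0 := add_nonneg (by positivity) hA0
    have hkR : (0:ℝ) < ((t + 1) ^ d : ℕ) := by exact_mod_cast hk0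
    set ε : ℝ := min (1 / (2 * t)) (ρ * d / (t * ((t + 1) ^ d : ℕ) * d * (C0 + 1))) with hε
    have hε0 : 0 < ε := by
      refine lt_min (by positivity) ?_
      apply div_pos (by positivity)
      have : (0:ℝ) < C0 + 1 := by linarith
      positivity
    have hεt : ε ≤ 1 / (2 * t) := min_le_left _ _
    set M : ℝ := 1 / (t * ε) with hM
    have hM1 : 1 ≤ M := by
      rw [hM, le_div_iff₀ (by positivity), one_mul]
      have h12 : (t:ℝ) * (1 / (2 * t)) = 1 / 2 := by field_simp
      have := mul_le_mul_of_nonneg_left hεt (le_of_lt htR0)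
      linarith
    have hMt : 1 / (M * t) = ε := by
      rw [hM]
      field_simp
    have hAM : ∑ j ∈ Finset.Icc 1 ((t + 1) ^ d - 1), |coef d t M f j| = A :=
      Finset.sum_congr rfl fun j _ => by rw [coef_M_indep ht hM1 (le_refl 1) j]
    refine ⟨M, hM1, ?_⟩
    set Bset := ⋃ i ∈ Finset.range ((t + 1) ^ d), cellBoundary d t M i with hBset
    have hBmeas : MeasurableSet Bset := by
      refine Finset.measurableSet_biUnion _ fun i _ => MeasurableSet.diff ?_ ?_
      · rw [cellStar_eq_Icc]; exact measurableSet_Icc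
      · rw [cellInner_eq_Icc]; exact measurableSet_Icc
    have hBvol : volume Bset ≤ ENNReal.ofReal (((t + 1) ^ d : ℕ) * d * ε) := by
      calc volume Bset ≤ ∑ i ∈ Finset.range ((t + 1) ^ d), volume (cellBoundary d t M i) :=
            measure_biUnion_finset_le _ _
        _ ≤ ∑ i ∈ Finset.range ((t + 1) ^ d), ENNReal.ofReal ((d : ℝ) * (1 / (M * t))) :=
            Finset.sum_le_sum fun i _ => volume_cellBoundary_le ht hM1 i
        _ = ((t + 1) ^ d : ℕ) * ENNReal.ofReal ((d : ℝ) * ε) := by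
            rw [hMt, Finset.sum_const, Finset.card_range, nsmul_eq_mul]
        _ = ENNReal.ofReal (((t + 1) ^ d : ℕ) * d * ε) := by
            rw [← ENNReal.ofReal_natCast ((t + 1) ^ d), ← ENNReal.ofReal_mul (by positivity),
              mul_assoc]
    -- pointwise bounds
    have hBd2 : ∀ x ∈ Set.Icc (0 : Fin d → ℝ) 1, |f x - fHat d t M f x| ≤ C0 := by
      intro x hx
      have h1 : |f x - f (fun _ => 0)| ≤ ρ * d := by
        have h2 := hf x hx _ h0mem
        have h3 : ∑ r : Fin d, |x r - (fun _ => (0:ℝ)) r| ≤ (d : ℝ) := by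
          calc ∑ r : Fin d, |x r - (fun _ => (0:ℝ)) r| ≤ ∑ _r : Fin d, (1:ℝ) := by
                refine Finset.sum_le_sum fun r _ => ?_
                have := hx.1 r
                have := hx.2 r
                rw [sub_zero, abs_of_nonneg (by assumption)]
                assumption
            _ = (d : ℝ) := by
                rw [Finset.sum_const, Finset.card_univ, Fintype.card_fin, nsmul_eq_mul, mul_one]
        calc |f x - f (fun _ => 0)| ≤ ρ * ∑ r : Fin d, |x r - (fun _ => (0:ℝ)) r| := h2
          _ ≤ ρ * d := mul_le_mul_of_nonneg_left h3 hρ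
      have h4 : |fHat d t M f x - f (fun _ => 0)| ≤ A := by
        rw [← hAM]
        exact fHat_global ht (by linarith) x
      calc |f x - fHat d t M f x|
          ≤ |f x - f (fun _ => 0)| + |f (fun _ => 0) - fHat d t M f x| := abs_sub_le _ _ _
        _ = |f x - f (fun _ => 0)| + |fHat d t M f x - f (fun _ => 0)| := by rw [abs_sub_comm (f (fun _ => 0))]
        _ ≤ ρ * d + A := add_le_add h1 h4
    have hBd1 : ∀ x ∈ Set.Icc (0 : Fin d → ℝ) 1 \ Bset,
        |f x - fHat d t M f x| ≤ ρ * d / t := by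
      intro x hx
      obtain ⟨i, hik, hxstar⟩ := exists_cell hd ht hx.1
      have hin : x ∈ cellInner d t M i := by
        by_contra hni
        exact hx.2 (Set.mem_iUnion₂.mpr ⟨i, Finset.mem_range.mpr hik, ⟨hxstar, hni⟩⟩)
      rw [fHat_inner ht hM1 hik hin]
      calc |f x - f (gridPt d t i)| ≤ ρ * ∑ r : Fin d, |x r - gridPt d t i r| :=
            hf x hx.1 _ (hgmem i)
        _ ≤ ρ * ∑ _r : Fin d, (1 / t : ℝ) := by
            refine mul_le_mul_of_nonneg_left (Finset.sum_le_sum fun r _ => ?_) hρ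
            have h5 := (hxstar r).1
            have h6 := (hxstar r).2
            rw [abs_of_nonneg (by linarith)]
            linarith
        _ = ρ * d / t := by
            rw [Finset.sum_const, Finset.card_univ, Fintype.card_fin, nsmul_eq_mul]
            ring
    -- integrability
    have hcont : ContinuousOn (fun x => |f x - fHat d t M f x|) (Set.Icc (0 : Fin d → ℝ) 1) :=
      ((lip_continuousOn hρ hf).sub (continuous_fHat d t M f).continuousOn).abs
    have hInt : IntegrableOn (fun x => |f x - fHat d t M f x|)
        (Set.Icc (0 : Fin d → ℝ) 1) volume := hcont.integrableOn_compact isCompact_Icc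
    have hIccvol : volume (Set.Icc (0 : Fin d → ℝ) 1) = 1 := by
      rw [Real.volume_Icc_pi]
      simp
    have hfin1 : volume (Set.Icc (0 : Fin d → ℝ) 1 ∩ Bset) < ⊤ :=
      lt_of_le_of_lt (measure_mono Set.inter_subset_left) (by rw [hIccvol]; exact ENNReal.one_lt_top)
    have hfin2 : volume (Set.Icc (0 : Fin d → ℝ) 1 \ Bset) < ⊤ :=
      lt_of_le_of_lt (measure_mono Set.diff_subset) (by rw [hIccvol]; exact ENNReal.one_lt_top)
    have hsplit := integral_inter_add_diff (s := Set.Icc (0 : Fin d → ℝ) 1) (t := Bset)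
      (f := fun x => |f x - fHat d t M f x|) (μ := volume) hBmeas hInt
    rw [← hsplit]
    -- bound the boundary part
    have hI1 : ∫ x in Set.Icc (0 : Fin d → ℝ) 1 ∩ Bset, |f x - fHat d t M f x|
        ≤ C0 * (volume (Set.Icc (0 : Fin d → ℝ) 1 ∩ Bset)).toReal := by
      have h7 := norm_setIntegral_le_of_norm_le_const (μ := volume) (C := C0) hfin1
        (fun x hx => by
          rw [Real.norm_eq_abs, abs_abs]
          exact hBd2 x hx.1)
      calc ∫ x in Set.Icc (0 : Fin d → ℝ) 1 ∩ Bset, |f x - fHat d t M f x|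
          ≤ ‖∫ x in Set.Icc (0 : Fin d → ℝ) 1 ∩ Bset, |f x - fHat d t M f x|‖ := by
            rw [Real.norm_eq_abs]; exact le_abs_self _
        _ ≤ C0 * (volume (Set.Icc (0 : Fin d → ℝ) 1 ∩ Bset)).toReal := h7
    have hvol1 : (volume (Set.Icc (0 : Fin d → ℝ) 1 ∩ Bset)).toReal
        ≤ ((t + 1) ^ d : ℕ) * d * ε := by
      have h8 : volume (Set.Icc (0 : Fin d → ℝ) 1 ∩ Bset)
          ≤ ENNReal.ofReal (((t + 1) ^ d : ℕ) * d * ε) :=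
        le_trans (measure_mono Set.inter_subset_right) hBvol
      calc (volume (Set.Icc (0 : Fin d → ℝ) 1 ∩ Bset)).toReal
          ≤ (ENNReal.ofReal (((t + 1) ^ d : ℕ) * d * ε)).toReal :=
            ENNReal.toReal_mono ENNReal.ofReal_ne_top h8
        _ = ((t + 1) ^ d : ℕ) * d * ε := ENNReal.toReal_ofReal (by positivity)
    have hI1' : ∫ x in Set.Icc (0 : Fin d → ℝ) 1 ∩ Bset, |f x - fHat d t M f x|
        ≤ ρ * d / t := by
      have hεle : ε ≤ ρ * d / (t * ((t + 1) ^ d : ℕ) * d * (C0 + 1)) := min_le_right _ _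
      have hC1 : (0:ℝ) < C0 + 1 := by linarith
      calc ∫ x in Set.Icc (0 : Fin d → ℝ) 1 ∩ Bset, |f x - fHat d t M f x|
          ≤ C0 * (((t + 1) ^ d : ℕ) * d * ε) :=
            le_trans hI1 (mul_le_mul_of_nonneg_left hvol1 hC00)
        _ ≤ C0 * (((t + 1) ^ d : ℕ) * d * (ρ * d / (t * ((t + 1) ^ d : ℕ) * d * (C0 + 1)))) := by
            refine mul_le_mul_of_nonneg_left ?_ hC00
            exact mul_le_mul_of_nonneg_left hεle (by positivity)
        _ = (ρ * d / t) * (C0 / (C0 + 1)) := by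
            field_simp
        _ ≤ (ρ * d / t) * 1 := by
            refine mul_le_mul_of_nonneg_left ?_ (by positivity)
            rw [div_le_one hC1]
            linarith
        _ = ρ * d / t := mul_one _
    -- bound the inner part
    have hI2 : ∫ x in Set.Icc (0 : Fin d → ℝ) 1 \ Bset, |f x - fHat d t M f x|
        ≤ ρ * d / t := by
      have h7 := norm_setIntegral_le_of_norm_le_const (μ := volume) (C := ρ * d / t) hfin2
        (fun x hx => by
          rw [Real.norm_eq_abs, abs_abs]
          exact hBd1 x hx)
      have hvol2 : (volume (Set.Icc (0 : Fin d → ℝ) 1 \ Bset)).toReal ≤ 1 := by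
        have h9 : volume (Set.Icc (0 : Fin d → ℝ) 1 \ Bset) ≤ 1 := by
          rw [← hIccvol]
          exact measure_mono Set.diff_subset
        calc (volume (Set.Icc (0 : Fin d → ℝ) 1 \ Bset)).toReal ≤ (1 : ENNReal).toReal :=
              ENNReal.toReal_mono ENNReal.one_ne_top h9
          _ = 1 := ENNReal.toReal_one
      calc ∫ x in Set.Icc (0 : Fin d → ℝ) 1 \ Bset, |f x - fHat d t M f x|
          ≤ ‖∫ x in Set.Icc (0 : Fin d → ℝ) 1 \ Bset, |f x - fHat d t M f x|‖ := by
            rw [Real.norm_eq_abs]; exact le_abs_self _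
        _ ≤ (ρ * d / t) * (volume (Set.Icc (0 : Fin d → ℝ) 1 \ Bset)).toReal := h7
        _ ≤ (ρ * d / t) * 1 := mul_le_mul_of_nonneg_left hvol2 (by positivity)
        _ = ρ * d / t := mul_one _
    have h3ρ : ρ * ↑d / ↑t + ρ * ↑d / ↑t ≤ 3 * ρ * ↑d / ↑t := by
      rw [← add_div]
      refine (div_le_div_iff_of_pos_right htR0).mpr ?_
      nlinarith
    linarith

end
end

section
/- For every function f : [0,1]^d → ℝ, every integer t ≥ 1, every M ≥ 1, and all indices i ∈ {0,…,k−1} and j ∈ {1,…,k−1}: ĝ_j(π^i/t) = a_j/t if π^j_r ≤ π^i_r for all r ∈ {1,…,d}, and ĝ_j(π^i/t) = 0 otherwise. -/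
open Finset MeasureTheory

noncomputable section

/-- For every f, t ≥ 1, M ≥ 1 and indices i ∈ {0,…,k−1}, j ∈ {1,…,k−1}:
ĝ_j(π^i/t) = a_j/t if π^j_r ≤ π^i_r for all r, and ĝ_j(π^i/t) = 0 otherwise. -/
theorem stmt_3 (d t : ℕ) (hd : 1 ≤ d) (ht : 1 ≤ t) (M : ℝ) (hM : 1 ≤ M)
    (f : (Fin d → ℝ) → ℝ) :
    ∀ i < (t + 1) ^ d, ∀ j, 1 ≤ j → j < (t + 1) ^ d →
      ((∀ r : Fin d, digit d t j r ≤ digit d t i r) →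
        gHat d t M f j (gridPt d t i) = coef d t M f j / t) ∧
      (¬ (∀ r : Fin d, digit d t j r ≤ digit d t i r) →
        gHat d t M f j (gridPt d t i) = 0) := by
  intro i hi j hj1 hj2
  have htR : (0:ℝ) < t := by exact_mod_cast ht
  constructor
  · intro h
    unfold gHat gUnit
    have hsum : (∑ r : Fin d, -M * relu (-(gridPt d t i r) + gridPt d t j r)) = 0 :=
      Finset.sum_eq_zero (fun r _ => by
        have : relu (-(gridPt d t i r) + gridPt d t j r) = 0 := by
          apply max_eq_left
          have : (digit d t j r : ℝ) / t ≤ (digit d t i r : ℝ) / t :=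
            div_le_div_of_nonneg_right (by exact_mod_cast h r) htR.le
          simp only [gridPt]
          linarith
        rw [this]; ring)
    rw [hsum, zero_add]
    have : relu (1 / (t:ℝ)) = 1 / t := max_eq_right (by positivity)
    rw [this, mul_one_div]
  · intro h
    push_neg at h
    obtain ⟨r, hr⟩ := h
    have hr' : digit d t i r + 1 ≤ digit d t j r := hr
    unfold gHat gUnit
    have hrel : relu (-(gridPt d t i r) + gridPt d t j r)
        = -(gridPt d t i r) + gridPt d t j r := by
      apply max_eq_right
      have : (digit d t i r : ℝ) / t ≤ (digit d t j r : ℝ) / t :=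
        div_le_div_of_nonneg_right (by exact_mod_cast le_of_lt hr) htR.le
      simp only [gridPt]; linarith
    have hge : (1:ℝ) / t ≤ -(gridPt d t i r) + gridPt d t j r := by
      have h1 : (digit d t i r : ℝ) + 1 ≤ (digit d t j r : ℝ) := by exact_mod_cast hr'
      have h2 : (1:ℝ)/t ≤ ((digit d t j r : ℝ) - digit d t i r)/t :=
        div_le_div_of_nonneg_right (by linarith) htR.le
      rw [sub_div] at h2
      simp only [gridPt]
      linarith
    have hterm : -M * relu (-(gridPt d t i r) + gridPt d t j r) ≤ -(1/t) := by
      rw [hrel]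
      have := mul_le_mul hM hge (by positivity) (by linarith)
      linarith
    have hrest : ∑ r' ∈ Finset.univ.erase r, -M * relu (-(gridPt d t i r') + gridPt d t j r') ≤ 0 :=
      Finset.sum_nonpos (fun r' _ => by
        have h1 : 0 ≤ relu (-(gridPt d t i r') + gridPt d t j r') := le_max_left _ _
        nlinarith)
    have hsum : (∑ r' : Fin d, -M * relu (-(gridPt d t i r') + gridPt d t j r')) + 1/t ≤ 0 := by
      rw [← Finset.add_sum_erase _ _ (Finset.mem_univ r)]
      linarith
    have h0 : relu ((∑ r' : Fin d, -M * relu (-(gridPt d t i r') + gridPt d t j r')) + 1/t) = 0 :=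
      max_eq_left hsum
    rw [h0, mul_zero]

end
end

section
/- If f : [0,1]^d → ℝ is ρ-Lipschitz in 1-norm, then for every integer t ≥ 1, every M ≥ 1 and every index i ∈ {1,…,k−1}, the coefficient of the constructed network satisfies |a_i| ≤ 2^{d−1}·d·ρ. -/
open Finset MeasureTheory

noncomputable section

namespace Stmt5Aux
open Finset

/-- index of a digit vector -/
def idx (d t : ℕ) (v : Fin d → ℕ) : ℕ := ∑ r : Fin d, v r * (t + 1) ^ (d - 1 - (r : ℕ))

lemma digit_le (d t i : ℕ) (r : Fin d) : digit d t i r ≤ t :=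
  Nat.lt_succ_iff.mp (Nat.mod_lt _ (Nat.succ_pos t))

lemma mod_pow_sum (t n i : ℕ) :
    i % (t + 1) ^ n = ∑ k ∈ Finset.range n, (i / (t + 1) ^ k % (t + 1)) * (t + 1) ^ k := by
  induction n with
  | zero => simp [Nat.mod_one]
  | succ n ih =>
      rw [Finset.sum_range_succ, ← ih, pow_succ, Nat.mod_mul]
      ring

lemma idx_digit {d t i : ℕ} (h : i < (t + 1) ^ d) : idx d t (digit d t i) = i := by
  have h1 : idx d t (digit d t i)
      = ∑ k ∈ Finset.range d, (i / (t + 1) ^ (d - 1 - k) % (t + 1)) * (t + 1) ^ (d - 1 - k) :=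
    Fin.sum_univ_eq_sum_range (fun k => (i / (t + 1) ^ (d - 1 - k) % (t + 1)) * (t + 1) ^ (d - 1 - k)) d
  rw [h1, Finset.sum_range_reflect (fun k => (i / (t + 1) ^ k % (t + 1)) * (t + 1) ^ k) d,
    ← mod_pow_sum]
  exact Nat.mod_eq_of_lt h

lemma sum_t_pow (t n : ℕ) : ∑ k ∈ Finset.range n, t * (t + 1) ^ k = (t + 1) ^ n - 1 := by
  induction n with
  | zero => simp
  | succ n ih =>
      rw [Finset.sum_range_succ, ih, pow_succ]
      have h1 : 1 ≤ (t + 1) ^ n := Nat.one_le_pow _ _ (Nat.succ_pos t)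
      have h2 : (t + 1) ^ n * (t + 1) = (t + 1) ^ n + t * (t + 1) ^ n := by ring
      rw [h2, Nat.sub_add_comm h1]

lemma idx_lt {d t : ℕ} {v : Fin d → ℕ} (hv : ∀ r, v r ≤ t) : idx d t v < (t + 1) ^ d := by
  have h1 : idx d t v ≤ ∑ r : Fin d, t * (t + 1) ^ (d - 1 - (r : ℕ)) :=
    Finset.sum_le_sum fun r _ => Nat.mul_le_mul_right _ (hv r)
  have h2 : ∑ r : Fin d, t * (t + 1) ^ (d - 1 - (r : ℕ))
      = ∑ k ∈ Finset.range d, t * (t + 1) ^ (d - 1 - k) :=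
    Fin.sum_univ_eq_sum_range (fun k => t * (t + 1) ^ (d - 1 - k)) d
  rw [Finset.sum_range_reflect (fun k => t * (t + 1) ^ k) d, sum_t_pow] at h2
  exact lt_of_le_of_lt (h1.trans_eq h2) (Nat.sub_lt (pow_pos (Nat.succ_pos t) d) one_pos)

lemma idx_mono {d t : ℕ} {v w : Fin d → ℕ} (h : ∀ r, v r ≤ w r) : idx d t v ≤ idx d t w :=
  Finset.sum_le_sum fun r _ => Nat.mul_le_mul_right _ (h r)

lemma digit_idx {d t : ℕ} {v : Fin d → ℕ} (hv : ∀ r, v r ≤ t) (r : Fin d) :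
    digit d t (idx d t v) r = v r := by
  classical
  set B := t + 1 with hB
  set e := d - 1 - (r : ℕ) with he
  have hrd : (r : ℕ) < d := r.isLt
  have hsplit : idx d t v = v r * B ^ e + ∑ s ∈ Finset.univ.erase r, v s * B ^ (d - 1 - (s : ℕ)) :=
    (Finset.add_sum_erase _ _ (Finset.mem_univ r)).symm
  set A := ∑ s ∈ (Finset.univ.erase r).filter (fun s : Fin d => (s : ℕ) < (r : ℕ)),
      v s * B ^ (d - 1 - (s : ℕ)) with hA
  set C := ∑ s ∈ (Finset.univ.erase r).filter (fun s : Fin d => ¬ (s : ℕ) < (r : ℕ)),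
      v s * B ^ (d - 1 - (s : ℕ)) with hC
  have hAC : idx d t v = v r * B ^ e + (A + C) := by
    rw [hsplit, Finset.sum_filter_add_sum_filter_not]
  have hdvdA : B ^ (e + 1) ∣ A := by
    apply Finset.dvd_sum
    intro s hs
    simp only [Finset.mem_filter, Finset.mem_erase] at hs
    have hsr : (s : ℕ) < (r : ℕ) := hs.2
    have hle : e + 1 ≤ d - 1 - (s : ℕ) := by omega
    exact Dvd.dvd.mul_left (pow_dvd_pow B hle) _
  have hCe : C < B ^ e := by
    have h1 : C ≤ ∑ s ∈ (Finset.univ.erase r).filter (fun s : Fin d => ¬ (s : ℕ) < (r : ℕ)),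
        t * B ^ (d - 1 - (s : ℕ)) :=
      Finset.sum_le_sum fun s _ => Nat.mul_le_mul_right _ (hv s)
    have hinj : ∀ s ∈ (Finset.univ.erase r).filter (fun s : Fin d => ¬ (s : ℕ) < (r : ℕ)),
        ∀ s' ∈ (Finset.univ.erase r).filter (fun s : Fin d => ¬ (s : ℕ) < (r : ℕ)),
        d - 1 - (s : ℕ) = d - 1 - (s' : ℕ) → s = s' := by
      intro s hs s' hs' hdd
      have h1 : (s : ℕ) < d := s.isLt
      have h2 : (s' : ℕ) < d := s'.isLt
      exact Fin.ext (by omega)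
    have h2 : ∑ s ∈ (Finset.univ.erase r).filter (fun s : Fin d => ¬ (s : ℕ) < (r : ℕ)),
        t * B ^ (d - 1 - (s : ℕ))
        = ∑ k ∈ ((Finset.univ.erase r).filter (fun s : Fin d => ¬ (s : ℕ) < (r : ℕ))).image
            (fun s : Fin d => d - 1 - (s : ℕ)), t * B ^ k :=
      by rw [Finset.sum_image hinj]
    have hsub : ((Finset.univ.erase r).filter (fun s : Fin d => ¬ (s : ℕ) < (r : ℕ))).image
        (fun s : Fin d => d - 1 - (s : ℕ)) ⊆ Finset.range e := by
      intro k hk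
      simp only [Finset.mem_image, Finset.mem_filter, Finset.mem_erase] at hk
      obtain ⟨s, ⟨⟨hne, _⟩, hge⟩, hkk⟩ := hk
      have hsd : (s : ℕ) < d := s.isLt
      have hner : (s : ℕ) ≠ (r : ℕ) := fun hh => hne (Fin.ext hh)
      rw [Finset.mem_range]
      omega
    have h3 : ∑ k ∈ ((Finset.univ.erase r).filter (fun s : Fin d => ¬ (s : ℕ) < (r : ℕ))).image
        (fun s : Fin d => d - 1 - (s : ℕ)), t * B ^ k ≤ ∑ k ∈ Finset.range e, t * B ^ k :=
      Finset.sum_le_sum_of_subset hsub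
    rw [sum_t_pow] at h3
    have h4 : 0 < B ^ e := pow_pos (Nat.succ_pos t) e
    have h5 : B ^ e = (t + 1) ^ e := by rw [hB]
    omega
  obtain ⟨A', hA'⟩ := hdvdA
  have key : idx d t v = B ^ e * (B * A' + v r) + C := by rw [hAC, hA']; ring
  have hBe : 0 < B ^ e := pow_pos (Nat.succ_pos t) e
  have hvr := hv r
  show idx d t v / B ^ e % B = v r
  rw [key, Nat.mul_add_div hBe, Nat.div_eq_of_lt hCe, Nat.add_zero, Nat.mul_add_mod,
    Nat.mod_eq_of_lt (by omega : v r < B)]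

lemma digit_zero (d t : ℕ) (r : Fin d) : digit d t 0 r = 0 := by simp [digit]

lemma idx_zero (d t : ℕ) : idx d t (fun _ => 0) = 0 := by simp [idx]

lemma eq_zero_of_idx_eq_zero {d t : ℕ} {v : Fin d → ℕ} (hv : ∀ r, v r ≤ t)
    (h : idx d t v = 0) : v = fun _ => 0 := by
  funext r
  have := digit_idx hv r
  rw [h, digit_zero] at this
  exact this.symm

lemma digit_ne_zero {d t i : ℕ} (hi1 : 1 ≤ i) (hi2 : i < (t + 1) ^ d) :
    digit d t i ≠ (fun _ => 0) := by
  intro h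
  have := idx_digit hi2
  rw [h, idx_zero] at this
  omega

end Stmt5Aux
namespace Stmt5Aux

lemma relu_of_nonneg {z : ℝ} (h : 0 ≤ z) : relu z = z := max_eq_right h
lemma relu_of_nonpos {z : ℝ} (h : z ≤ 0) : relu z = 0 := max_eq_left h
lemma relu_nonneg (z : ℝ) : 0 ≤ relu z := le_max_left _ _

/-- domination of grid points -/
def dom (d t j i : ℕ) : Prop := ∀ r : Fin d, digit d t j r ≤ digit d t i r

instance (d t j i : ℕ) : Decidable (dom d t j i) := by unfold dom; infer_instance

lemma gUnit_grid_dom {d t : ℕ} (ht : 1 ≤ t) (M a : ℝ) {j i : ℕ}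
    (hdom : dom d t j i) : gUnit d t M a j (gridPt d t i) = a / t := by
  have ht0 : (0 : ℝ) < t := by exact_mod_cast ht
  have inner : ∀ r : Fin d, relu (-(gridPt d t i r) + gridPt d t j r) = 0 := by
    intro r
    apply relu_of_nonpos
    have h1 : (digit d t j r : ℝ) ≤ digit d t i r := by exact_mod_cast hdom r
    have h2 : (digit d t j r : ℝ) / t ≤ (digit d t i r : ℝ) / t := by gcongr
    simp only [gridPt]
    linarith
  have hsum : (∑ r : Fin d, -M * relu (-(gridPt d t i r) + gridPt d t j r)) = 0 :=
    Finset.sum_eq_zero fun r _ => by rw [inner r, mul_zero]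
  rw [gUnit, hsum, zero_add, relu_of_nonneg (by positivity), mul_one_div]

lemma gUnit_grid_not_dom {d t : ℕ} (ht : 1 ≤ t) {M : ℝ} (hM : 1 ≤ M) (a : ℝ) {j i : ℕ}
    (h : ¬ dom d t j i) : gUnit d t M a j (gridPt d t i) = 0 := by
  unfold dom at h
  push_neg at h
  obtain ⟨r0, hr0⟩ := h
  have ht0 : (0 : ℝ) < t := by exact_mod_cast ht
  have hM0 : (0 : ℝ) ≤ M := le_trans zero_le_one hM
  have hterm : ∀ r : Fin d, -M * relu (-(gridPt d t i r) + gridPt d t j r) ≤ 0 := fun r =>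
    mul_nonpos_of_nonpos_of_nonneg (neg_nonpos.mpr hM0) (relu_nonneg _)
  have h1 : (1 : ℝ) / t ≤ -(gridPt d t i r0) + gridPt d t j r0 := by
    have hc : (digit d t i r0 : ℝ) + 1 ≤ digit d t j r0 := by exact_mod_cast hr0
    simp only [gridPt]
    rw [div_le_iff₀ ht0]
    have : (-(↑(digit d t i r0) / ↑t) + ↑(digit d t j r0) / ↑t) * ↑t
        = (digit d t j r0 : ℝ) - digit d t i r0 := by field_simp; ring
    rw [this]
    linarith
  have hr0term : -M * relu (-(gridPt d t i r0) + gridPt d t j r0) ≤ -M / t := by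
    rw [relu_of_nonneg (le_trans (by positivity) h1)]
    have h2 := mul_le_mul_of_nonneg_left h1 hM0
    have h3 : M / t = M * (1 / t) := (mul_one_div M t).symm
    rw [neg_div]
    linarith
  have hsum : (∑ r : Fin d, -M * relu (-(gridPt d t i r) + gridPt d t j r)) + 1 / t ≤ 0 := by
    have h2 : (∑ r : Fin d, -M * relu (-(gridPt d t i r) + gridPt d t j r)) ≤ -M / t := by
      rw [← Finset.add_sum_erase _ _ (Finset.mem_univ r0)]
      have h3 : ∑ r ∈ Finset.univ.erase r0, -M * relu (-(gridPt d t i r) + gridPt d t j r) ≤ 0 :=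
        Finset.sum_nonpos fun r _ => hterm r
      linarith
    have h3 : (1 : ℝ) / t ≤ M / t := by gcongr
    have h4 : -M / t + M / t = 0 := by ring
    linarith
  rw [gUnit, relu_of_nonpos hsum, mul_zero]

lemma net_eq_sum (d t : ℕ) (M : ℝ) (f : (Fin d → ℝ) → ℝ) (n : ℕ) (x : Fin d → ℝ) :
    net d t M f n x = f (fun _ => 0) + ∑ j ∈ Finset.Icc 1 n, gHat d t M f j x := by
  induction n with
  | zero => simp [net]
  | succ n ih =>
      have hstep : net d t M f (n + 1) x = net d t M f n x +
          gUnit d t M ((t : ℝ) * (f (gridPt d t (n + 1)) - net d t M f n (gridPt d t (n + 1))))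
            (n + 1) x := rfl
      have hcoef : gUnit d t M ((t : ℝ) * (f (gridPt d t (n + 1))
          - net d t M f n (gridPt d t (n + 1)))) (n + 1) x = gHat d t M f (n + 1) x := by
        rw [gHat, coef]
        norm_num
      rw [hstep, hcoef, ih, Finset.sum_Icc_succ_top (Nat.succ_le_succ (Nat.zero_le n))]
      ring

lemma coef_rec {d t : ℕ} (ht : 1 ≤ t) {M : ℝ} (hM : 1 ≤ M) (f : (Fin d → ℝ) → ℝ) (i : ℕ) :
    f (gridPt d t i) = f (fun _ => 0)
      + (∑ j ∈ (Finset.Icc 1 (i - 1)).filter (fun j => dom d t j i), coef d t M f j / t)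
      + coef d t M f i / t := by
  have ht0 : (0 : ℝ) < t := by exact_mod_cast ht
  have h1 : coef d t M f i / t = f (gridPt d t i) - net d t M f (i - 1) (gridPt d t i) := by
    rw [coef]; field_simp
  have h2 := net_eq_sum d t M f (i - 1) (gridPt d t i)
  have h3 : ∀ j, gHat d t M f j (gridPt d t i)
      = if dom d t j i then coef d t M f j / t else 0 := by
    intro j
    by_cases hdj : dom d t j i
    · rw [if_pos hdj, gHat, gUnit_grid_dom ht M _ hdj]
    · rw [if_neg hdj, gHat, gUnit_grid_not_dom ht hM _ hdj]
  have h4 : ∑ j ∈ Finset.Icc 1 (i - 1), gHat d t M f j (gridPt d t i)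
      = ∑ j ∈ (Finset.Icc 1 (i - 1)).filter (fun j => dom d t j i), coef d t M f j / t := by
    rw [Finset.sum_congr rfl (fun j _ => h3 j), Finset.sum_filter]
  rw [h2, h4] at h1
  linarith

end Stmt5Aux
namespace Stmt5Aux

def sub1 {d : ℕ} (S : Finset (Fin d)) (v : Fin d → ℕ) : Fin d → ℕ :=
  fun r => v r - (if r ∈ S then 1 else 0)

def add1 {d : ℕ} (S : Finset (Fin d)) (v : Fin d → ℕ) : Fin d → ℕ :=
  fun r => v r + (if r ∈ S then 1 else 0)

def supp {d : ℕ} (v : Fin d → ℕ) : Finset (Fin d) := Finset.univ.filter (fun r => 1 ≤ v r)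

def pt (d t : ℕ) (v : Fin d → ℕ) : Fin d → ℝ := fun r => (v r : ℝ) / t

def Dsum (d t : ℕ) (f : (Fin d → ℝ) → ℝ) (v : Fin d → ℕ) : ℝ :=
  ∑ S ∈ (supp v).powerset, (-1 : ℝ) ^ S.card * f (pt d t (sub1 S v))

lemma sum_powerset_neg_one_pow_card_real {α : Type*} [DecidableEq α] (x : Finset α) :
    ∑ m ∈ x.powerset, (-1 : ℝ) ^ m.card = if x = ∅ then 1 else 0 := by
  have h := Finset.sum_powerset_neg_one_pow_card (x := x)
  have h2 : ∑ m ∈ x.powerset, (-1 : ℝ) ^ m.card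
      = ((∑ m ∈ x.powerset, (-1 : ℤ) ^ m.card : ℤ) : ℝ) := by push_cast; rfl
  rw [h2, h]
  split <;> simp

lemma sum_Dsum (d t : ℕ) (f : (Fin d → ℝ) → ℝ) (v : Fin d → ℕ) :
    ∑ w ∈ Finset.Icc 0 v, Dsum d t f w = f (pt d t v) := by
  classical
  have step1 : ∑ w ∈ Finset.Icc 0 v, Dsum d t f w
      = ∑ p ∈ (Finset.Icc 0 v).sigma (fun w => (supp w).powerset),
          (-1 : ℝ) ^ p.2.card * f (pt d t (sub1 p.2 p.1)) :=
    Finset.sum_sigma' _ _ _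
  have step2 : ∑ p ∈ (Finset.Icc 0 v).sigma (fun w => (supp w).powerset),
          (-1 : ℝ) ^ p.2.card * f (pt d t (sub1 p.2 p.1))
      = ∑ p ∈ (Finset.Icc 0 v).sigma
            (fun u => (Finset.univ.filter (fun r => u r < v r)).powerset),
          (-1 : ℝ) ^ p.2.card * f (pt d t p.1) := by
    apply Finset.sum_nbij' (fun p => ⟨sub1 p.2 p.1, p.2⟩) (fun p => ⟨add1 p.2 p.1, p.2⟩)
    · rintro ⟨w, S⟩ hp
      simp only [Finset.mem_sigma, Finset.mem_Icc, Finset.mem_powerset] at hp ⊢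
      obtain ⟨⟨-, hwv⟩, hS⟩ := hp
      refine ⟨⟨fun r => Nat.zero_le _, fun r => ?_⟩, fun r hr => ?_⟩
      · exact le_trans (Nat.sub_le _ _) (hwv r)
      · have h1 : 1 ≤ w r := by
          have := hS hr
          simpa [supp] using this
        have h2 : w r ≤ v r := hwv r
        simp only [Finset.mem_filter, Finset.mem_univ, true_and, sub1, if_pos hr]
        exact Finset.mem_filter.mpr ⟨Finset.mem_univ _, by simp only [if_pos hr]; omega⟩
    · rintro ⟨u, S⟩ hp
      simp only [Finset.mem_sigma, Finset.mem_Icc, Finset.mem_powerset] at hp ⊢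
      obtain ⟨⟨-, huv⟩, hS⟩ := hp
      refine ⟨⟨fun r => Nat.zero_le _, fun r => ?_⟩, fun r hr => ?_⟩
      · by_cases hr : r ∈ S
        · have := hS hr
          simp only [Finset.mem_filter, Finset.mem_univ, true_and] at this
          simp only [add1, if_pos hr]
          omega
        · simpa [add1, hr] using huv r
      · simp [supp, add1, hr]
        exact Finset.mem_filter.mpr ⟨Finset.mem_univ _, by simp only [if_pos hr]; omega⟩
    · rintro ⟨w, S⟩ hp
      simp only [Finset.mem_sigma, Finset.mem_Icc, Finset.mem_powerset] at hp
      obtain ⟨-, hS⟩ := hp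
      have : add1 S (sub1 S w) = w := by
        funext r
        by_cases hr : r ∈ S
        · have h1 : 1 ≤ w r := by
            have := hS hr
            simpa [supp] using this
          simp only [add1, sub1, if_pos hr]
          omega
        · simp [add1, sub1, hr]
      simp [this]
    · rintro ⟨u, S⟩ hp
      have : sub1 S (add1 S u) = u := by
        funext r
        by_cases hr : r ∈ S
        · simp only [add1, sub1, if_pos hr]; omega
        · simp [add1, sub1, hr]
      simp [this]
    · rintro ⟨w, S⟩ _
      rfl
  rw [step1, step2, ← Finset.sum_sigma' (Finset.Icc 0 v) (fun u => (Finset.univ.filter (fun r => u r < v r)).powerset) (fun u S => (-1 : ℝ) ^ S.card * f (pt d t u))]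
  have step3 : ∀ u ∈ Finset.Icc 0 v,
      (∑ S ∈ (Finset.univ.filter (fun r => u r < v r)).powerset,
        (-1 : ℝ) ^ S.card * f (pt d t u))
      = (if u = v then (1 : ℝ) else 0) * f (pt d t u) := by
    intro u hu
    rw [Finset.mem_Icc] at hu
    rw [← Finset.sum_mul, sum_powerset_neg_one_pow_card_real]
    congr 1
    by_cases huv : u = v
    · rw [if_pos huv, if_pos]
      subst huv
      simp
    · rw [if_neg ?_, if_neg huv]
      intro hemp
      apply huv
      funext r
      have hle : u r ≤ v r := hu.2 r
      have : ¬ u r < v r := by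
        intro hlt
        have : r ∈ Finset.univ.filter (fun r => u r < v r) := by simp [hlt]
        rw [hemp] at this
        exact absurd this (Finset.notMem_empty r)
      omega
  rw [Finset.sum_congr rfl step3]
  rw [Finset.sum_eq_single_of_mem v (Finset.mem_Icc.mpr ⟨zero_le, le_refl v⟩)]
  · rw [if_pos rfl, one_mul]
  · intro u _ hune
    rw [if_neg hune, zero_mul]

lemma inv_unique {d : ℕ} (C₁ C₂ : (Fin d → ℕ) → ℝ) (vmax : Fin d → ℕ)
    (h : ∀ w, w ≤ vmax → ∑ u ∈ Finset.Icc 0 w, C₁ u = ∑ u ∈ Finset.Icc 0 w, C₂ u) :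
    ∀ w, w ≤ vmax → C₁ w = C₂ w := by
  suffices H : ∀ n (w : Fin d → ℕ), (∑ r, w r) = n → w ≤ vmax → C₁ w = C₂ w from
    fun w hw => H _ w rfl hw
  intro n
  induction n using Nat.strong_induction_on with
  | _ n ih =>
    intro w hn hw
    have hmem : w ∈ Finset.Icc 0 w := Finset.mem_Icc.mpr ⟨fun r => Nat.zero_le _, le_refl w⟩
    have h1 := h w hw
    rw [← Finset.add_sum_erase _ C₁ hmem, ← Finset.add_sum_erase _ C₂ hmem] at h1
    have h2 : ∑ u ∈ (Finset.Icc 0 w).erase w, C₁ u = ∑ u ∈ (Finset.Icc 0 w).erase w, C₂ u := by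
      apply Finset.sum_congr rfl
      intro u hu
      rw [Finset.mem_erase, Finset.mem_Icc] at hu
      have hune : u ≠ w := hu.1
      have hule : ∀ r, u r ≤ w r := fun r => hu.2.2 r
      have hlt : ∑ r, u r < n := by
        have hex : ∃ r, u r < w r := by
          by_contra hcon
          push_neg at hcon
          exact hune (funext fun r => le_antisymm (hule r) (hcon r))
        obtain ⟨r0, hr0⟩ := hex
        calc ∑ r, u r < ∑ r, w r :=
              Finset.sum_lt_sum (fun r _ => hule r) ⟨r0, Finset.mem_univ r0, hr0⟩
          _ = n := hn
      exact ih _ hlt u rfl (le_trans hu.2.2 hw)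
    linarith

end Stmt5Aux
namespace Stmt5Aux

lemma pt_zero (d t : ℕ) : pt d t (fun _ => 0) = fun _ => (0 : ℝ) := by
  funext r; simp [pt]

lemma coef_eq_Dsum {d t : ℕ} (ht : 1 ≤ t) {M : ℝ} (hM : 1 ≤ M) (f : (Fin d → ℝ) → ℝ) {i : ℕ}
    (hi1 : 1 ≤ i) (hi2 : i < (t + 1) ^ d) :
    coef d t M f i / t = Dsum d t f (digit d t i) := by
  classical
  set C : (Fin d → ℕ) → ℝ :=
    fun v => if v = (fun _ => 0) then f (fun _ => 0) else coef d t M f (idx d t v) / t with hCdef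
  have main : ∀ v : Fin d → ℕ, v ≤ (fun _ => t) → f (pt d t v) = ∑ u ∈ Finset.Icc 0 v, C u := by
    intro v hv
    by_cases hv0 : v = (fun _ => 0)
    · subst hv0
      have hIcc : Finset.Icc (0 : Fin d → ℕ) (fun _ => 0) = {fun _ => 0} := by
        rw [show (fun _ => 0 : Fin d → ℕ) = (0 : Fin d → ℕ) from rfl, Finset.Icc_self]
      rw [hIcc, Finset.sum_singleton, hCdef]
      simp [pt_zero]
    · set i' := idx d t v with hi'
      have hbox : ∀ r, v r ≤ t := fun r => hv r
      have hi'1 : 1 ≤ i' := by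
        rcases Nat.eq_zero_or_pos i' with h0 | h1
        · exact absurd (eq_zero_of_idx_eq_zero hbox h0) hv0
        · exact h1
      have hdig : ∀ r, digit d t i' r = v r := digit_idx hbox
      have hgrid : gridPt d t i' = pt d t v := by
        funext r
        simp only [gridPt, pt, hdig r]
      have hrec := coef_rec ht hM f i'
      rw [hgrid] at hrec
      -- now rewrite the RHS sum
      have hvmem : v ∈ Finset.Icc (0 : Fin d → ℕ) v :=
        Finset.mem_Icc.mpr ⟨zero_le, le_refl v⟩
      have h0mem : (fun _ => 0 : Fin d → ℕ) ∈ Finset.Icc (0 : Fin d → ℕ) v :=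
        Finset.mem_Icc.mpr ⟨zero_le, fun r => Nat.zero_le _⟩
      have hvmem' : v ∈ (Finset.Icc (0 : Fin d → ℕ) v).erase (fun _ => 0) :=
        Finset.mem_erase.mpr ⟨hv0, hvmem⟩
      have split1 : ∑ u ∈ Finset.Icc (0 : Fin d → ℕ) v, C u
          = C (fun _ => 0) + ∑ u ∈ (Finset.Icc (0 : Fin d → ℕ) v).erase (fun _ => 0), C u :=
        (Finset.add_sum_erase _ C h0mem).symm
      have split2 : ∑ u ∈ (Finset.Icc (0 : Fin d → ℕ) v).erase (fun _ => 0), C u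
          = C v + ∑ u ∈ ((Finset.Icc (0 : Fin d → ℕ) v).erase (fun _ => 0)).erase v, C u :=
        (Finset.add_sum_erase _ C hvmem').symm
      have hbij : ∑ u ∈ ((Finset.Icc (0 : Fin d → ℕ) v).erase (fun _ => 0)).erase v, C u
          = ∑ j ∈ (Finset.Icc 1 (i' - 1)).filter (fun j => dom d t j i'), coef d t M f j / t := by
        apply Finset.sum_nbij' (fun u => idx d t u) (fun j => digit d t j)
        · intro u hu
          simp only [Finset.mem_erase, Finset.mem_Icc] at hu
          obtain ⟨hunv, hun0, -, hule⟩ := hu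
          have hubox : ∀ r, u r ≤ t := fun r => le_trans (hule r) (hbox r)
          have hdigu : ∀ r, digit d t (idx d t u) r = u r := digit_idx hubox
          have h1 : 1 ≤ idx d t u := by
            rcases Nat.eq_zero_or_pos (idx d t u) with h0 | h1
            · exact absurd (eq_zero_of_idx_eq_zero hubox h0) hun0
            · exact h1
          have hle : idx d t u ≤ i' := idx_mono (fun r => hule r)
          have hne : idx d t u ≠ i' := by
            intro heq
            apply hunv
            funext r
            rw [← hdigu r, heq, hdig r]
          simp only [Finset.mem_filter, Finset.mem_Icc]
          refine ⟨⟨h1, by omega⟩, fun r => ?_⟩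
          rw [hdigu r, hdig r]
          exact hule r
        · intro j hj
          simp only [Finset.mem_filter, Finset.mem_Icc] at hj
          obtain ⟨⟨hj1, hj2⟩, hjdom⟩ := hj
          have hjlt : j < (t + 1) ^ d := lt_of_le_of_lt (by omega : j ≤ i') (idx_lt hbox)
          have hjdig : ∀ r, digit d t j r ≤ v r := fun r => by
            rw [← hdig r]; exact hjdom r
          simp only [Finset.mem_erase, Finset.mem_Icc]
          refine ⟨?_, ?_, zero_le, fun r => hjdig r⟩
          · intro heq
            have : idx d t (digit d t j) = idx d t v := by rw [heq]
            rw [idx_digit hjlt] at this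
            omega
          · exact digit_ne_zero hj1 hjlt
        · intro u hu
          simp only [Finset.mem_erase, Finset.mem_Icc] at hu
          have hubox : ∀ r, u r ≤ t := fun r => le_trans (hu.2.2.2 r) (hbox r)
          funext r
          exact digit_idx hubox r
        · intro j hj
          simp only [Finset.mem_filter, Finset.mem_Icc] at hj
          have hjlt : j < (t + 1) ^ d := lt_of_le_of_lt (by omega : j ≤ i') (idx_lt hbox)
          exact idx_digit hjlt
        · intro u hu
          simp only [Finset.mem_erase, Finset.mem_Icc] at hu
          rw [hCdef]
          simp only [if_neg hu.2.1]
      have hC0 : C (fun _ => 0) = f (fun _ => 0) := by rw [hCdef]; simp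
      have hCv : C v = coef d t M f i' / t := by rw [hCdef]; simp only [if_neg hv0]; rfl
      rw [split1, split2, hbij, hC0, hCv, hrec]
      ring
  have huniq := inv_unique C (Dsum d t f) (fun _ => t)
    (fun w hw => by rw [← main w hw, sum_Dsum])
  have hv : digit d t i ≤ (fun _ => t) := fun r => digit_le d t i r
  have hC := huniq (digit d t i) hv
  have hC' : (if digit d t i = (fun _ => 0) then f (fun _ => 0)
      else coef d t M f (idx d t (digit d t i)) / t) = Dsum d t f (digit d t i) := hC
  rw [if_neg (digit_ne_zero hi1 hi2), idx_digit hi2] at hC'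
  exact hC'

end Stmt5Aux
namespace Stmt5Aux

lemma Dsum_bound {d t : ℕ} (ht : 1 ≤ t) {ρ : ℝ} (hρ : 0 ≤ ρ) {f : (Fin d → ℝ) → ℝ}
    (hf : LipOneNorm d ρ (Set.Icc 0 1) f) {v : Fin d → ℕ} (hv : ∀ r, v r ≤ t)
    (hv0 : v ≠ (fun _ => 0)) :
    |Dsum d t f v| ≤ 2 ^ (d - 1) * ρ / t := by
  classical
  have ht0 : (0 : ℝ) < t := by exact_mod_cast ht
  -- pick a coordinate in the support
  have hex : ∃ r0, 1 ≤ v r0 := by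
    by_contra hcon
    push_neg at hcon
    exact hv0 (funext fun r => by have := hcon r; omega)
  obtain ⟨r0, hr0⟩ := hex
  have hr0mem : r0 ∈ supp v := by simp [supp, hr0]
  set s' := (supp v).erase r0 with hs'
  have hr0n : r0 ∉ s' := Finset.notMem_erase _ _
  have hins : supp v = insert r0 s' := (Finset.insert_erase hr0mem).symm
  -- membership of evaluation points in [0,1]^d
  have hmem : ∀ S : Finset (Fin d), pt d t (sub1 S v) ∈ Set.Icc (0 : Fin d → ℝ) 1 := by
    intro S
    constructor
    · intro r
      have : (0 : ℝ) ≤ (sub1 S v r : ℝ) / t := by positivity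
      exact this
    · intro r
      have h1 : sub1 S v r ≤ t := le_trans (Nat.sub_le _ _) (hv r)
      have h2 : ((sub1 S v r : ℕ) : ℝ) ≤ (t : ℝ) := by exact_mod_cast h1
      calc (sub1 S v r : ℝ) / t ≤ (t : ℝ) / t := by gcongr
        _ = 1 := div_self (ne_of_gt ht0)
  -- pairwise bound
  have hpair : ∀ S ∈ s'.powerset,
      |(-1 : ℝ) ^ S.card * f (pt d t (sub1 S v))
        + (-1 : ℝ) ^ (insert r0 S).card * f (pt d t (sub1 (insert r0 S) v))| ≤ ρ / t := by
    intro S hS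
    rw [Finset.mem_powerset] at hS
    have hr0S : r0 ∉ S := fun h => hr0n (hS h)
    have hcard : (insert r0 S).card = S.card + 1 := Finset.card_insert_of_notMem hr0S
    have heq : (-1 : ℝ) ^ S.card * f (pt d t (sub1 S v))
        + (-1 : ℝ) ^ (insert r0 S).card * f (pt d t (sub1 (insert r0 S) v))
        = (-1 : ℝ) ^ S.card * (f (pt d t (sub1 S v)) - f (pt d t (sub1 (insert r0 S) v))) := by
      rw [hcard, pow_succ]
      ring
    rw [heq, abs_mul, abs_pow, abs_neg, abs_one, one_pow, one_mul]
    have hdist : ∑ r : Fin d, |pt d t (sub1 S v) r - pt d t (sub1 (insert r0 S) v) r| = 1 / t := by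
      rw [Finset.sum_eq_single_of_mem r0 (Finset.mem_univ r0)]
      · have e1 : sub1 S v r0 = v r0 := by simp [sub1, hr0S]
        have e2 : sub1 (insert r0 S) v r0 = v r0 - 1 := by
          simp [sub1, Finset.mem_insert_self]
        rw [show pt d t (sub1 S v) r0 = (sub1 S v r0 : ℝ) / t from rfl,
          show pt d t (sub1 (insert r0 S) v) r0 = (sub1 (insert r0 S) v r0 : ℝ) / t from rfl,
          e1, e2]
        have hc : ((v r0 - 1 : ℕ) : ℝ) = (v r0 : ℝ) - 1 := by
          push_cast [Nat.cast_sub hr0]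
          ring
        rw [hc]
        rw [show (v r0 : ℝ) / t - ((v r0 : ℝ) - 1) / t = 1 / t by field_simp; ring]
        rw [abs_of_nonneg (by positivity)]
      · intro r _ hrne
        have e3 : sub1 S v r = sub1 (insert r0 S) v r := by
          simp [sub1, Finset.mem_insert, hrne]
        rw [show pt d t (sub1 S v) r = (sub1 S v r : ℝ) / t from rfl,
          show pt d t (sub1 (insert r0 S) v) r = (sub1 (insert r0 S) v r : ℝ) / t from rfl, e3]
        simp
    have hlip := hf _ (hmem S) _ (hmem (insert r0 S))
    rw [hdist] at hlip
    calc |f (pt d t (sub1 S v)) - f (pt d t (sub1 (insert r0 S) v))| ≤ ρ * (1 / t) := hlip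
      _ = ρ / t := by ring
  -- assemble
  have hsplit : Dsum d t f v = ∑ S ∈ s'.powerset,
      ((-1 : ℝ) ^ S.card * f (pt d t (sub1 S v))
        + (-1 : ℝ) ^ (insert r0 S).card * f (pt d t (sub1 (insert r0 S) v))) := by
    rw [Dsum, hins, Finset.sum_powerset_insert hr0n, Finset.sum_add_distrib]
  rw [hsplit]
  calc |∑ S ∈ s'.powerset, ((-1 : ℝ) ^ S.card * f (pt d t (sub1 S v))
        + (-1 : ℝ) ^ (insert r0 S).card * f (pt d t (sub1 (insert r0 S) v)))|
      ≤ ∑ S ∈ s'.powerset, |(-1 : ℝ) ^ S.card * f (pt d t (sub1 S v))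
        + (-1 : ℝ) ^ (insert r0 S).card * f (pt d t (sub1 (insert r0 S) v))| :=
        Finset.abs_sum_le_sum_abs _ _
    _ ≤ ∑ S ∈ s'.powerset, (ρ / t) := Finset.sum_le_sum hpair
    _ = (s'.powerset.card : ℝ) * (ρ / t) := by rw [Finset.sum_const, nsmul_eq_mul]
    _ = (2 : ℝ) ^ s'.card * (ρ / t) := by rw [Finset.card_powerset]; norm_num
    _ ≤ (2 : ℝ) ^ (d - 1) * (ρ / t) := by
        have h1 : s'.card ≤ d - 1 := by
          have h2 : (supp v).card ≤ d := by
            calc (supp v).card ≤ (Finset.univ : Finset (Fin d)).card :=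
                  Finset.card_le_card (Finset.filter_subset _ _)
              _ = d := Finset.card_univ.trans (Fintype.card_fin d)
          have h3 : s'.card = (supp v).card - 1 := Finset.card_erase_of_mem hr0mem
          omega
        have h4 : (2 : ℝ) ^ s'.card ≤ (2 : ℝ) ^ (d - 1) :=
          pow_le_pow_right₀ one_le_two h1
        have h5 : 0 ≤ ρ / t := by positivity
        exact mul_le_mul_of_nonneg_right h4 h5
    _ = 2 ^ (d - 1) * ρ / t := by ring

end Stmt5Aux

/-- If f : [0,1]^d → ℝ is ρ-Lipschitz in 1-norm, then for every t ≥ 1,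
M ≥ 1 and index i ∈ {1,…,k−1}, the coefficient satisfies |a_i| ≤ 2^{d−1}·d·ρ. -/
theorem stmt_5 (d t : ℕ) (hd : 1 ≤ d) (ht : 1 ≤ t) (M : ℝ) (hM : 1 ≤ M) (ρ : ℝ) (hρ : 0 ≤ ρ)
    (f : (Fin d → ℝ) → ℝ) (hf : LipOneNorm d ρ (Set.Icc 0 1) f) :
    ∀ i, 1 ≤ i → i < (t + 1) ^ d →
      |coef d t M f i| ≤ 2 ^ (d - 1) * d * ρ := by
  intro i hi1 hi2
  have ht0 : (0 : ℝ) < t := by exact_mod_cast ht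
  have h2 := Stmt5Aux.coef_eq_Dsum (d := d) ht hM f hi1 hi2
  have hv : ∀ r, digit d t i r ≤ t := Stmt5Aux.digit_le d t i
  have hv0 := Stmt5Aux.digit_ne_zero hi1 hi2
  have h3 := Stmt5Aux.Dsum_bound ht hρ hf hv hv0
  have h1 : coef d t M f i = (t : ℝ) * (coef d t M f i / t) := by field_simp
  rw [h1, h2, abs_mul, abs_of_nonneg ht0.le]
  have h4 : (t : ℝ) * |Stmt5Aux.Dsum d t f (digit d t i)| ≤ (t : ℝ) * (2 ^ (d - 1) * ρ / t) :=
    mul_le_mul_of_nonneg_left h3 ht0.le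
  have h5 : (t : ℝ) * (2 ^ (d - 1) * ρ / t) = 2 ^ (d - 1) * ρ := by field_simp
  have h6 : (2 : ℝ) ^ (d - 1) * ρ ≤ 2 ^ (d - 1) * d * ρ := by
    have hd1 : (1 : ℝ) ≤ d := by exact_mod_cast hd
    have hp : (0 : ℝ) ≤ 2 ^ (d - 1) * ρ := by positivity
    calc (2 : ℝ) ^ (d - 1) * ρ = 2 ^ (d - 1) * ρ * 1 := by ring
      _ ≤ 2 ^ (d - 1) * ρ * d := mul_le_mul_of_nonneg_left hd1 hp
      _ = 2 ^ (d - 1) * d * ρ := by ring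
  linarith

end
end
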